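/- There exists a constant C₀ > 0 such that for every f ∈ L¹(ℝ²) ∩ L^∞(ℝ²), the convolution K * f satisfies ‖K * f‖_{L^∞} ≤ C₀ ‖f‖_{L¹}^{1/2} ‖f‖_{L^∞}^{1/2}, where K(x) = x^⊥/(2π|x|²). -/

import Mathlib

open MeasureTheory Metric Set Filter RealInnerProductSpace
noncomputable section
abbrev E2 := EuclideanSpace ℝ (Fin 2)
def perp (x : E2) : E2 := WithLp.toLp 2 ![-x 1, x 0]

def K (x : E2) : E2 := (1/(2 * Real.pi * ‖x‖^2) : ℝ) • perp x

/-
Split the convolution integral at distance `R` from `x`. On the ball, `|f| ≤ ‖f‖_∞` and, since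
`|K z| = 1 / (2π|z|)` is integrable near `0` in the plane, `∫_{|z|<R} |K| = R`; off the ball,
`|K| ≤ 1 / (2πR)` and `∫ |f| = ‖f‖₁`. Hence `|K * f (x)| ≤ ‖f‖_∞ R + ‖f‖₁ / R` for every `R > 0`,
and the infimum over `R` is `2 ‖f‖₁^{1/2} ‖f‖_∞^{1/2}`.
-/

open scoped ENNReal Topology

theorem lintegral_inv_norm_ball_of_finrank_eq_two {E : Type*} [NormedAddCommGroup E]
    [NormedSpace ℝ E] [FiniteDimensional ℝ E] [MeasurableSpace E] [BorelSpace E] (μ : Measure E)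
    [μ.IsAddHaarMeasure] (hE : Module.finrank ℝ E = 2) {R : ℝ} (hR : 0 ≤ R) :
    ∫⁻ x in ball 0 R, ENNReal.ofReal ‖x‖⁻¹ ∂μ = ENNReal.ofReal (2 * μ.real (ball 0 1) * R) := by
  have : Nontrivial E := Module.nontrivial_of_finrank_eq_succ hE
  set φ : ℝ → ℝ := (Iio R).indicator (·⁻¹)
  have hradial : ∀ y ∈ Ioi (0 : ℝ),
      y ^ (Module.finrank ℝ E - 1) • φ y = (Ioo 0 R).indicator 1 y := by
    intro y (hy : 0 < y)
    by_cases hyR : y < R <;> simp [φ, hE, hy, hyR, hy.ne']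
  have hint : Integrable (fun x : E => φ ‖x‖) μ := by
    rw [integrable_fun_norm_addHaar μ, integrableOn_congr_fun hradial measurableSet_Ioi]
    exact ((integrable_indicator_iff measurableSet_Ioo).2
      (integrableOn_const measure_Ioo_lt_top.ne)).integrableOn
  calc ∫⁻ x in ball 0 R, ENNReal.ofReal ‖x‖⁻¹ ∂μ = ∫⁻ x, ENNReal.ofReal (φ ‖x‖) ∂μ := by
        rw [← lintegral_indicator measurableSet_ball]
        congr 1; ext x
        by_cases hx : ‖x‖ < R <;> simp [φ, indicator, hx]
    _ = ENNReal.ofReal (∫ x, φ ‖x‖ ∂μ) :=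
        (ofReal_integral_eq_lintegral_ofReal hint (.of_forall fun x => by
          simp only [φ, indicator]; split_ifs <;> positivity)).symm
    _ = ENNReal.ofReal (2 * μ.real (ball 0 1) * R) := by
        rw [integral_fun_norm_addHaar μ, setIntegral_congr_fun measurableSet_Ioi hradial,
          integral_indicator measurableSet_Ioo, hE]
        simp [Measure.restrict_restrict measurableSet_Ioo, inter_eq_left.2 Ioo_subset_Ioi_self, hR]
        ring_nf

theorem le_two_mul_sqrt_mul_sqrt_of_forall_le_mul_add_div {A a b : ℝ} (ha : 0 ≤ a) (hb : 0 ≤ b)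
    (h : ∀ R > 0, A ≤ a * R + b / R) : A ≤ 2 * √a * √b := by
  -- The optimal radius `√b / √a`, perturbed so that it exists also when `a` or `b` vanishes.
  have hδ : ∀ δ > 0, A ≤ 2 * (√a + δ) * (√b + δ) := by
    intro δ hδ
    have hs : 0 < √a + δ := by positivity
    have ht : 0 < √b + δ := by positivity
    have has : a ≤ (√a + δ) ^ 2 := by nlinarith [Real.sq_sqrt ha, Real.sqrt_nonneg a]
    have hbt : b ≤ (√b + δ) ^ 2 := by nlinarith [Real.sq_sqrt hb, Real.sqrt_nonneg b]
    calc A ≤ a * ((√b + δ) / (√a + δ)) + b / ((√b + δ) / (√a + δ)) := h _ (by positivity)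
      _ ≤ (√a + δ) ^ 2 * ((√b + δ) / (√a + δ)) + (√b + δ) ^ 2 / ((√b + δ) / (√a + δ)) := by
          gcongr
      _ = 2 * (√a + δ) * (√b + δ) := by field_simp; ring
  have hlim : Tendsto (fun δ : ℝ => 2 * (√a + δ) * (√b + δ)) (𝓝[>] 0) (𝓝 (2 * √a * √b)) := by
    refine tendsto_nhdsWithin_of_tendsto_nhds ?_
    exact (by fun_prop : Continuous fun δ : ℝ => 2 * (√a + δ) * (√b + δ)).tendsto' 0 _ (by simp)
  exact ge_of_tendsto hlim (eventually_nhdsWithin_of_forall hδ)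

theorem lintegral_enorm_mul_sub_le {G F : Type*} [NormedAddCommGroup G] [MeasurableSpace G]
    [OpensMeasurableSpace G] [MeasurableAdd G] [MeasurableNeg G] [ENorm F] (μ : Measure G)
    [μ.IsAddLeftInvariant] [μ.IsNegInvariant] {f : G → F} (hf : eLpNorm f ∞ μ ≠ ∞)
    {k : G → ℝ≥0∞} {R : ℝ} {c : ℝ≥0∞} (hc : c ≠ ∞) (hkc : ∀ z, R ≤ ‖z‖ → k z ≤ c) (x : G) :
    ∫⁻ y, ‖f y‖ₑ * k (x - y) ∂μ ≤
      eLpNorm f ∞ μ * ∫⁻ z in ball 0 R, k z ∂μ + eLpNorm f 1 μ * c := by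
  rw [← lintegral_add_compl _ (measurableSet_ball (x := x) (ε := R))]
  gcongr
  · calc ∫⁻ y in ball x R, ‖f y‖ₑ * k (x - y) ∂μ
        ≤ ∫⁻ y in ball x R, eLpNorm f ∞ μ * k (x - y) ∂μ := by
          refine lintegral_mono_ae ?_
          filter_upwards [ae_restrict_of_ae (enorm_ae_le_eLpNormEssSup f μ)] with y hy
          rw [eLpNorm_exponent_top]
          gcongr
      _ = eLpNorm f ∞ μ * ∫⁻ z in ball 0 R, k z ∂μ := by
          rw [lintegral_const_mul' _ _ hf, ← lintegral_indicator measurableSet_ball,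
            ← lintegral_indicator measurableSet_ball, ← lintegral_sub_left_eq_self _ x]
          congr 2 with y
          simp [indicator, mem_ball, dist_eq_norm]
  · calc ∫⁻ y in (ball x R)ᶜ, ‖f y‖ₑ * k (x - y) ∂μ
        ≤ ∫⁻ y, ‖f y‖ₑ * c ∂μ := by
          refine (setLIntegral_mono' measurableSet_ball.compl fun y hy => ?_).trans
            (setLIntegral_le_lintegral _ _)
          gcongr
          refine hkc _ ?_
          simpa [mem_ball, dist_eq_norm, norm_sub_rev] using hy
      _ = eLpNorm f 1 μ * c := by
          rw [lintegral_mul_const' _ _ hc, eLpNorm_one_eq_lintegral_enorm]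

lemma norm_perp (x : E2) : ‖perp x‖ = ‖x‖ := by
  simp [EuclideanSpace.norm_eq, perp, Fin.sum_univ_two, add_comm]

lemma enorm_K (x : E2) : ‖K x‖ₑ = ENNReal.ofReal (2 * Real.pi)⁻¹ * ENNReal.ofReal ‖x‖⁻¹ := by
  rw [← ofReal_norm, K, norm_smul, norm_perp, ← ENNReal.ofReal_mul (by positivity)]
  rcases eq_or_ne x 0 with rfl | hx
  · simp
  · congr 1
    rw [Real.norm_of_nonneg (by positivity)]
    field_simp

lemma lintegral_enorm_K_ball {R : ℝ} (hR : 0 ≤ R) :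
    ∫⁻ z in ball 0 R, ‖K z‖ₑ = ENNReal.ofReal R := by
  have hπ : volume.real (ball (0 : E2) 1) = Real.pi := by simp [Measure.real, Real.pi_pos.le]
  simp_rw [enorm_K]
  rw [lintegral_const_mul' _ _ ENNReal.ofReal_ne_top,
    lintegral_inv_norm_ball_of_finrank_eq_two volume finrank_euclideanSpace_fin hR, hπ,
    ← ENNReal.ofReal_mul (by positivity)]
  congr 1
  field_simp

lemma enorm_K_le {R : ℝ} (hR : 0 < R) {z : E2} (hz : R ≤ ‖z‖) :
    ‖K z‖ₑ ≤ ENNReal.ofReal (2 * Real.pi * R)⁻¹ := by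
  rw [enorm_K, ← ENNReal.ofReal_mul (by positivity), ← mul_inv]
  gcongr

theorem norm_integral_smul_K_le {f : E2 → ℝ} (hf1 : MemLp f 1) (hf : MemLp f ∞) (x : E2)
    {R : ℝ} (hR : 0 < R) :
    ‖∫ y, f y • K (x - y)‖ ≤
      (eLpNorm f ∞ volume).toReal * R + (eLpNorm f 1 volume).toReal / R := by
  have hsplit := lintegral_enorm_mul_sub_le volume hf.eLpNorm_ne_top ENNReal.ofReal_ne_top
    (fun z hz => enorm_K_le hR hz) x
  rw [lintegral_enorm_K_ball hR.le] at hsplit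
  have hfin : eLpNorm f ∞ volume * ENNReal.ofReal R +
      eLpNorm f 1 volume * ENNReal.ofReal (2 * Real.pi * R)⁻¹ ≠ ∞ := by
    finiteness [hf.eLpNorm_ne_top, hf1.eLpNorm_ne_top]
  have h2π : 1 ≤ 2 * Real.pi := by linarith [Real.pi_gt_three]
  calc ‖∫ y, f y • K (x - y)‖ = ‖∫ y, f y • K (x - y)‖ₑ.toReal := (toReal_enorm _).symm
    _ ≤ (eLpNorm f ∞ volume * ENNReal.ofReal R +
          eLpNorm f 1 volume * ENNReal.ofReal (2 * Real.pi * R)⁻¹).toReal := by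
        refine ENNReal.toReal_mono hfin ((enorm_integral_le_lintegral_enorm _).trans ?_)
        simpa only [enorm_smul] using hsplit
    _ = (eLpNorm f ∞ volume).toReal * R + (eLpNorm f 1 volume).toReal * (2 * Real.pi * R)⁻¹ := by
        rw [ENNReal.toReal_add (by finiteness [hf.eLpNorm_ne_top])
          (by finiteness [hf1.eLpNorm_ne_top]), ENNReal.toReal_mul, ENNReal.toReal_mul,
          ENNReal.toReal_ofReal hR.le, ENNReal.toReal_ofReal (by positivity)]
    _ ≤ (eLpNorm f ∞ volume).toReal * R + (eLpNorm f 1 volume).toReal / R := by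
        rw [div_eq_mul_inv]
        gcongr
        exact le_mul_of_one_le_left hR.le h2π

theorem stmt2 :
    ∃ C₀ : ℝ, 0 < C₀ ∧
      ∀ f : E2 → ℝ, MemLp f 1 (volume : Measure E2) → MemLp f ⊤ (volume : Measure E2) →
        ∀ x : E2, ‖∫ y : E2, f y • K (x - y)‖ ≤
          C₀ * (eLpNorm f 1 volume).toReal ^ (1/2 : ℝ) *
            (eLpNorm f ⊤ volume).toReal ^ (1/2 : ℝ) := by
  refine ⟨2, two_pos, fun f hf1 hf x => ?_⟩
  rw [← Real.sqrt_eq_rpow, ← Real.sqrt_eq_rpow, mul_right_comm]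
  refine le_two_mul_sqrt_mul_sqrt_of_forall_le_mul_add_div ENNReal.toReal_nonneg
    ENNReal.toReal_nonneg fun R hR => ?_
  exact norm_integral_smul_K_le hf1 hf x hR
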